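/- Let (x_t) be a sequence in ℝ^n, h : ℕ → ℝ^n → ℝ, and let α : ℝ → ℝ be a function satisfying α(0) = 0, α(r) ≥ 0 and α(r) ≤ r for all r ≥ 0. If for every t with h(t, x_t) ≥ 0 the condition h(t+1, x_{t+1}) − h(t, x_t) ≥ −α(h(t, x_t)) holds, and h(0, x_0) ≥ 0, then h(t, x_t) ≥ 0 for all t ∈ ℕ. -/

import Mathlib

section

variable {G : Type*} [AddCommGroup G] [LinearOrder G] [IsOrderedAddMonoid G]

theorem nonneg_of_le_of_neg_le_sub {a r s : G} (ha : a ≤ r) (hstep : -a ≤ s - r) : 0 ≤ s :=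
  calc (0 : G) ≤ r - a := sub_nonneg.2 ha
    _ ≤ s := sub_le_iff_le_add.2 (neg_le_sub_iff_le_add.1 hstep)

theorem forall_nonneg_of_cbf {u : ℕ → G} {α : G → G} (hαle : ∀ r, 0 ≤ r → α r ≤ r)
    (hstep : ∀ t, 0 ≤ u t → -α (u t) ≤ u (t + 1) - u t) (h0 : 0 ≤ u 0) :
    ∀ t, 0 ≤ u t
  | 0 => h0
  | t + 1 =>
    have ht := forall_nonneg_of_cbf hαle hstep h0 t
    nonneg_of_le_of_neg_le_sub (hαle _ ht) (hstep t ht)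

end

theorem discrete_cbf_forward_invariance_classK_general
    {n : ℕ} (x : ℕ → (Fin n → ℝ)) (h : ℕ → (Fin n → ℝ) → ℝ)
    (α : ℝ → ℝ)
    (hαle : ∀ r : ℝ, 0 ≤ r → α r ≤ r)
    (hcbf : ∀ t : ℕ, h t (x t) ≥ 0 →
      h (t + 1) (x (t + 1)) - h t (x t) ≥ -α (h t (x t)))
    (hinit : h 0 (x 0) ≥ 0) :
    ∀ t : ℕ, h t (x t) ≥ 0 :=
  forall_nonneg_of_cbf (u := fun t => h t (x t)) hαle hcbf hinit

/-- Discrete-time CBF condition with a general rate function `α` satisfying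
`α 0 = 0`, `0 ≤ α r` and `α r ≤ r` for `r ≥ 0` keeps the trajectory in the
time-varying safe set `S(t) = {x | h t x ≥ 0}`. -/
theorem discrete_cbf_forward_invariance_classK
    {n : ℕ} (x : ℕ → (Fin n → ℝ)) (h : ℕ → (Fin n → ℝ) → ℝ)
    (α : ℝ → ℝ) (hα0 : α 0 = 0)
    (hαnonneg : ∀ r : ℝ, 0 ≤ r → 0 ≤ α r)
    (hαle : ∀ r : ℝ, 0 ≤ r → α r ≤ r)
    (hcbf : ∀ t : ℕ, h t (x t) ≥ 0 →
      h (t + 1) (x (t + 1)) - h t (x t) ≥ -α (h t (x t)))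
    (hinit : h 0 (x 0) ≥ 0) :
    ∀ t : ℕ, h t (x t) ≥ 0 :=
  discrete_cbf_forward_invariance_classK_general x h α hαle hcbf hinit
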